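/- Let $(S_k)_{k\ge1}$ be real random variables, $p\ge 1$. If $\sum_{n=1}^{\infty} n^{-1} P\big(\max_{1\le k\le n}|S_k| > \varepsilon n^{1/p}\big) < \infty$ for every $\varepsilon>0$, then $S_n/n^{1/p} \to 0$ almost surely. -/

import Mathlib

/-!
Condense the hypothesis over dyadic blocks: on `[2^k, 2^(k+1))` the weights `1/(n+1)` sum to at
least `1/2`, and every event `max_{1 ≤ j ≤ n+1} |S_j| > ε (n+1)^(1/p)` contains
`max_{1 ≤ j ≤ 2^k} |S_j| > ε 2^((k+1)/p)`, so the latter events have summable probabilities.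
By Borel–Cantelli almost surely only finitely many of them occur, and since every `n` lies in a
block with `2^(k+1) ≤ 4n`, this gives `|S_n| ≤ ε 4^(1/p) n^(1/p)` eventually. Letting `ε` run
through a sequence tending to `0` gives `S_n = o(n^(1/p))` almost surely.
-/

open MeasureTheory Filter Asymptotics
open scoped ENNReal

/-- The event `max_{1 ≤ k ≤ n} |S k| > t`. -/
def maxAbsExceeds {Ω : Type*} (S : ℕ → Ω → ℝ) (n : ℕ) (t : ℝ) : Set Ω :=
  {ω | ∃ k : ℕ, 1 ≤ k ∧ k ≤ n ∧ t < |S k ω|}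

theorem maxAbsExceeds_mono {Ω : Type*} (S : ℕ → Ω → ℝ) {n n' : ℕ} {t t' : ℝ}
    (hn : n ≤ n') (ht : t' ≤ t) : maxAbsExceeds S n t ⊆ maxAbsExceeds S n' t' := by
  rintro ω ⟨k, hk1, hkn, hlt⟩
  exact ⟨k, hk1, hkn.trans hn, ht.trans_lt hlt⟩

theorem le_two_mul_sum_Ico_inv_mul {f : ℕ → ℝ≥0∞} {c : ℝ≥0∞} (k : ℕ)
    (h : ∀ n, 2 ^ k ≤ n → n < 2 ^ (k + 1) → c ≤ f n) :
    c ≤ 2 * ∑ n ∈ Finset.Ico (2 ^ k : ℕ) (2 ^ (k + 1)), ((n : ℝ≥0∞) + 1)⁻¹ * f n := by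
  have hcard : (Finset.Ico (2 ^ k : ℕ) (2 ^ (k + 1))).card = 2 ^ k := by
    rw [Nat.card_Ico, pow_succ]; omega
  calc c = 2 ^ k * ((2 ^ k)⁻¹ * c) := by
        rw [← mul_assoc, ENNReal.mul_inv_cancel (by positivity) (by simp), one_mul]
    _ = ∑ n ∈ Finset.Ico (2 ^ k : ℕ) (2 ^ (k + 1)), (2 ^ k)⁻¹ * c := by
        simp [hcard]
    _ ≤ ∑ n ∈ Finset.Ico (2 ^ k : ℕ) (2 ^ (k + 1)), 2 * (((n : ℝ≥0∞) + 1)⁻¹ * f n) := by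
        refine Finset.sum_le_sum fun n hn => ?_
        obtain ⟨hkn, hnk⟩ := Finset.mem_Ico.mp hn
        have hn1 : (n : ℝ≥0∞) + 1 ≤ 2 ^ (k + 1) := by exact_mod_cast hnk
        calc (2 ^ k : ℝ≥0∞)⁻¹ * c = 2 * (2 ^ (k + 1))⁻¹ * c := by
              rw [pow_succ', ENNReal.mul_inv (by simp) (by simp), ← mul_assoc,
                ENNReal.mul_inv_cancel (by simp) (by simp), one_mul]
          _ ≤ 2 * (((n : ℝ≥0∞) + 1)⁻¹ * f n) := by
              rw [mul_assoc]; gcongr; exact h n hkn hnk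
    _ = _ := by rw [Finset.mul_sum]

theorem tsum_le_two_mul_tsum_inv_mul {f g : ℕ → ℝ≥0∞}
    (h : ∀ k n, 2 ^ k ≤ n → n < 2 ^ (k + 1) → g k ≤ f n) :
    ∑' k, g k ≤ 2 * ∑' n : ℕ, ((n : ℝ≥0∞) + 1)⁻¹ * f n := by
  have hpartial : ∀ K, ∑ k ∈ Finset.range K, g k
      ≤ 2 * ∑ n ∈ Finset.range (2 ^ K), ((n : ℝ≥0∞) + 1)⁻¹ * f n := by
    intro K
    induction K with
    | zero => simp
    | succ K ih =>
      rw [Finset.sum_range_succ,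
        ← Finset.sum_range_add_sum_Ico _ (Nat.pow_le_pow_right two_pos K.le_succ), mul_add]
      exact add_le_add ih (le_two_mul_sum_Ico_inv_mul K (h K))
  rw [ENNReal.tsum_eq_iSup_nat]
  exact iSup_le fun K => (hpartial K).trans (by gcongr; exact ENNReal.sum_le_tsum _)

theorem eventually_abs_le_of_eventually_dyadic {x : ℕ → ℝ} {r δ : ℝ}
    (hr : 0 ≤ r) (hδ : 0 ≤ δ)
    (h : ∀ᶠ k in atTop, ∀ j, 1 ≤ j → j ≤ 2 ^ k → |x j| ≤ δ * (2 ^ (k + 1)) ^ r) :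
    ∀ᶠ n in atTop, |x n| ≤ δ * 4 ^ r * (n : ℝ) ^ r := by
  obtain ⟨K, hK⟩ := eventually_atTop.mp h
  filter_upwards [eventually_ge_atTop (2 ^ K)] with n hn
  have hn0 : n ≠ 0 := Nat.pos_iff_ne_zero.mp (Nat.one_le_two_pow.trans hn)
  -- `n` lies in the block ending at `2 ^ (log n + 1)`, and `2 ^ (log n + 2) ≤ 4 n`.
  set k := Nat.log 2 n + 1
  have hKk : K ≤ k := (Nat.le_log_of_pow_le one_lt_two hn).trans (Nat.le_succ _)
  have hnk : n ≤ 2 ^ k := (Nat.lt_pow_succ_log_self one_lt_two n).le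
  have hk4 : (2 : ℝ) ^ (k + 1) ≤ 4 * n := by
    have : 2 ^ (k + 1) ≤ 4 * n := by
      rw [show k + 1 = Nat.log 2 n + 2 by rfl, pow_add]
      linarith [Nat.pow_log_le_self 2 hn0]
    exact_mod_cast this
  calc |x n| ≤ δ * (2 ^ (k + 1)) ^ r := hK k hKk n (Nat.one_le_iff_ne_zero.mpr hn0) hnk
    _ ≤ δ * (4 * n) ^ r := by gcongr
    _ = δ * 4 ^ r * (n : ℝ) ^ r := by
      rw [Real.mul_rpow (by norm_num) n.cast_nonneg, mul_assoc]

theorem ae_eventually_abs_le_of_tsum_ne_top {Ω : Type*} [MeasurableSpace Ω] {μ : Measure Ω}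
    {S : ℕ → Ω → ℝ} {r δ : ℝ} (hr : 0 ≤ r) (hδ : 0 ≤ δ)
    (hsum : ∑' n : ℕ,
      ((n : ℝ≥0∞) + 1)⁻¹ * μ (maxAbsExceeds S (n + 1) (δ * ((n : ℝ) + 1) ^ r)) ≠ ∞) :
    ∀ᵐ ω ∂μ, ∀ᶠ n in atTop, |S n ω| ≤ δ * 4 ^ r * (n : ℝ) ^ r := by
  have hdyadic : ∑' k, μ (maxAbsExceeds S (2 ^ k) (δ * (2 ^ (k + 1)) ^ r)) ≠ ∞ := by
    refine ne_top_of_le_ne_top (ENNReal.mul_ne_top ENNReal.ofNat_ne_top hsum)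
      (tsum_le_two_mul_tsum_inv_mul fun k n hkn hnk =>
        measure_mono (maxAbsExceeds_mono S (hkn.trans n.le_succ) ?_))
    have : (n : ℝ) + 1 ≤ 2 ^ (k + 1) := by exact_mod_cast hnk
    gcongr
  filter_upwards [ae_eventually_notMem hdyadic] with ω hω
  refine eventually_abs_le_of_eventually_dyadic hr hδ (hω.mono fun k hk j hj1 hjk => ?_)
  by_contra! hlt
  exact hk ⟨j, hj1, hjk, hlt⟩

theorem ae_isLittleO_of_forall_pos {Ω ι E F : Type*} [MeasurableSpace Ω] {μ : Measure Ω}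
    [SeminormedAddCommGroup E] [Norm F] {l : Filter ι} {X : ι → Ω → E} {a : ι → F}
    (h : ∀ ε : ℝ, 0 < ε → ∀ᵐ ω ∂μ, ∀ᶠ i in l, ‖X i ω‖ ≤ ε * ‖a i‖) :
    ∀ᵐ ω ∂μ, (X · ω) =o[l] a := by
  have hnat : ∀ᵐ ω ∂μ, ∀ m : ℕ, ∀ᶠ i in l, ‖X i ω‖ ≤ ((m : ℝ) + 1)⁻¹ * ‖a i‖ :=
    ae_all_iff.mpr fun m => h _ (by positivity)
  filter_upwards [hnat] with ω hω
  refine isLittleO_iff_nat_mul_le'.mpr fun m => (hω m).mono fun i hi => ?_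
  rw [← div_eq_inv_mul, le_div_iff₀' (by positivity)] at hi
  nlinarith [norm_nonneg (X i ω)]

theorem stmt_12_general {Ω : Type*} [MeasurableSpace Ω] (μ : Measure Ω)
    (p : ℝ) (hp : 1 ≤ p)
    (S : ℕ → Ω → ℝ)
    (hsum : ∀ ε : ℝ, 0 < ε →
      (∑' n : ℕ, (((n : ℝ≥0∞) + 1))⁻¹ *
          μ {ω | ∃ k : ℕ, 1 ≤ k ∧ k ≤ n + 1 ∧
            ε * ((n : ℝ) + 1) ^ (1 / p) < |S k ω|}) < ⊤) :
    ∀ᵐ ω ∂μ, Tendsto (fun n : ℕ => S n ω / (n : ℝ) ^ (1 / p)) atTop (nhds 0) := by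
  have hr : 0 ≤ 1 / p := by positivity
  have hbound : ∀ ε : ℝ, 0 < ε →
      ∀ᵐ ω ∂μ, ∀ᶠ n : ℕ in atTop, ‖S n ω‖ ≤ ε * ‖(n : ℝ) ^ (1 / p)‖ := by
    intro ε hε
    have h4 : (0 : ℝ) < 4 ^ (1 / p) := by positivity
    filter_upwards [ae_eventually_abs_le_of_tsum_ne_top hr (div_pos hε h4).le
      (hsum _ (div_pos hε h4)).ne] with ω hω
    filter_upwards [hω] with n hn
    rwa [div_mul_cancel₀ ε h4.ne', ← Real.norm_eq_abs,
      ← Real.norm_of_nonneg (Real.rpow_nonneg n.cast_nonneg _)] at hn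
  filter_upwards [ae_isLittleO_of_forall_pos hbound] with ω hω
  exact hω.tendsto_div_nhds_zero

/-- from weighted complete convergence of maxima to the
Marcinkiewicz–Zygmund strong law. -/
theorem stmt_12 {Ω : Type*} [MeasurableSpace Ω] (μ : Measure Ω) [IsProbabilityMeasure μ]
    (p : ℝ) (hp : 1 ≤ p)
    (S : ℕ → Ω → ℝ) (hS : ∀ k, Measurable (S k))
    (hsum : ∀ ε : ℝ, 0 < ε →
      (∑' n : ℕ, (((n : ℝ≥0∞) + 1))⁻¹ *
          μ {ω | ∃ k : ℕ, 1 ≤ k ∧ k ≤ n + 1 ∧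
            ε * ((n : ℝ) + 1) ^ (1 / p) < |S k ω|}) < ⊤) :
    ∀ᵐ ω ∂μ, Tendsto (fun n : ℕ => S n ω / (n : ℝ) ^ (1 / p)) atTop (nhds 0) :=
  stmt_12_general μ p hp S hsum
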